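/- arXiv:1407.4084 — 3 statements merged into one kernel-verified Lean document; each statement's English description precedes it below -/
import Mathlib

section
/- Let u be C¹ on [0,1] with u(0) = u(1) = 1, let -1 ≤ b < 3, and let 0 ≤ β ≤ 1. Then ∫₀¹ (p(x) + β p'(x)) · ((b/2)u(x)² + ((3-b)/2)u'(x)²) dx ≥ δ_b, where p(x) = cosh(x-1/2)/(2 sinh(1/2)), p'(x) = sinh(x-1/2)/(2 sinh(1/2)), and δ_b = (√(3-b)/4)(√(3(1+b)) - √(3-b)). -/
open Real Set intervalIntegral

noncomputable def p (x : ℝ) : ℝ := Real.cosh (x - 1/2) / (2 * Real.sinh (1/2))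

noncomputable def p' (x : ℝ) : ℝ := Real.sinh (x - 1/2) / (2 * Real.sinh (1/2))

noncomputable def delta (b : ℝ) : ℝ :=
  Real.sqrt (3 - b) / 4 * (Real.sqrt (3 * (1 + b)) - Real.sqrt (3 - b))

/-!
Calibration. Since `p'' = p`, the function `G = δ_b (p' + β p) u²` has derivative
`δ_b ((p + β p') u² + 2 (p' + β p) u u')`, and `G 1 - G 0 = δ_b (p' 1 - p' 0) = δ_b` because
`u = 1` at both ends. It therefore suffices that the integrand dominates `G'` pointwise.
With `W = p + β p'`, `W' = p' + β p` and `c = (3 - b)/2`, the difference is a quadratic form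
in `(u, u')` whose discriminant condition reads `δ_b² W'² ≤ c (b/2 - δ_b) W² = δ_b² W²`: the
number `δ_b` is the positive root of `k² = c (b/2 - k)`, and `|W'| ≤ W` because
`p² - p'² > 0` and `|β| ≤ 1`.
-/

lemma sinh_one_half_pos : 0 < sinh (1/2 : ℝ) := sinh_pos_iff.mpr one_half_pos

lemma hasDerivAt_p (x : ℝ) : HasDerivAt p (p' x) x := by
  unfold p p'
  simpa using (((hasDerivAt_id x).sub_const (1/2 : ℝ)).cosh).div_const (2 * sinh (1/2))

lemma hasDerivAt_p' (x : ℝ) : HasDerivAt p' (p x) x := by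
  unfold p p'
  simpa using (((hasDerivAt_id x).sub_const (1/2 : ℝ)).sinh).div_const (2 * sinh (1/2))

@[fun_prop]
lemma continuous_p : Continuous p := by
  unfold p; fun_prop

@[fun_prop]
lemma continuous_p' : Continuous p' := by
  unfold p'; fun_prop

lemma p_one_eq_p_zero : p 1 = p 0 := by
  simp only [p]
  rw [show (1 : ℝ) - 1/2 = 1/2 by norm_num, show (0 : ℝ) - 1/2 = -(1/2) by norm_num, cosh_neg]

lemma p'_one_sub_p'_zero : p' 1 - p' 0 = 1 := by
  have := sinh_one_half_pos.ne'
  simp only [p']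
  rw [show (1 : ℝ) - 1/2 = 1/2 by norm_num, show (0 : ℝ) - 1/2 = -(1/2) by norm_num, sinh_neg]
  field_simp
  ring

lemma p_sq_sub_p'_sq (x : ℝ) : p x ^ 2 - p' x ^ 2 = (2 * sinh (1/2))⁻¹ ^ 2 := by
  unfold p p'
  rw [div_pow, div_pow, ← sub_div, cosh_sq_sub_sinh_sq, inv_pow, one_div]

lemma p_sq_sub_p'_sq_pos (x : ℝ) : 0 < p x ^ 2 - p' x ^ 2 := by
  have := sinh_one_half_pos
  rw [p_sq_sub_p'_sq]
  positivity

lemma p_pos (x : ℝ) : 0 < p x := by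
  have := sinh_one_half_pos
  unfold p; positivity

lemma abs_p'_lt_p (x : ℝ) : |p' x| < p x :=
  abs_lt_of_sq_lt_sq (sub_pos.mp (p_sq_sub_p'_sq_pos x)) (p_pos x).le

lemma p_add_mul_p'_pos {β : ℝ} (hβ : |β| ≤ 1) (x : ℝ) : 0 < p x + β * p' x := by
  have : |β * p' x| ≤ |p' x| := by
    rw [abs_mul]; exact mul_le_of_le_one_left (abs_nonneg _) hβ
  linarith [neg_abs_le (β * p' x), abs_p'_lt_p x]

lemma sq_p'_add_mul_p_le {β : ℝ} (hβ : |β| ≤ 1) (x : ℝ) :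
    (p' x + β * p x) ^ 2 ≤ (p x + β * p' x) ^ 2 := by
  have hβ2 : 0 ≤ 1 - β ^ 2 := sub_nonneg.mpr ((sq_le_one_iff_abs_le_one β).mpr hβ)
  have : 0 ≤ (1 - β ^ 2) * (p x ^ 2 - p' x ^ 2) := mul_nonneg hβ2 (p_sq_sub_p'_sq_pos x).le
  linear_combination this

lemma HasDerivAt.p'_add_mul_p_mul_sq {u : ℝ → ℝ} {v x : ℝ} (hu : HasDerivAt u v x) (β : ℝ) :
    HasDerivAt (fun y => (p' y + β * p y) * u y ^ 2)
      ((p x + β * p' x) * u x ^ 2 + (p' x + β * p x) * (2 * u x * v)) x := by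
  have hW' : HasDerivAt (fun y => p' y + β * p y) (p x + β * p' x) x :=
    (hasDerivAt_p' x).add ((hasDerivAt_p x).const_mul β)
  have hu2 : HasDerivAt (fun y => u y ^ 2) (2 * u x * v) x := by
    simpa using hu.fun_pow 2
  exact hW'.fun_mul hu2

lemma delta_sq {b : ℝ} (hb : -1 ≤ b) (hb3 : b ≤ 3) :
    delta b ^ 2 = (3 - b) / 2 * (b / 2 - delta b) := by
  have hs : √(3 - b) ^ 2 = 3 - b := sq_sqrt (by linarith)
  have ht : √(3 * (1 + b)) ^ 2 = 3 * (1 + b) := sq_sqrt (by linarith)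
  unfold delta
  linear_combination
    (√(3 * (1 + b)) ^ 2 / 16 - √(3 - b) * √(3 * (1 + b)) / 8 + √(3 - b) ^ 2 / 16 - (3 - b) / 16) * hs
      + (3 - b) / 16 * ht

lemma quadratic_form_le {a c k W W' U V : ℝ} (hc : 0 < c) (hW : 0 < W) (hW' : W' ^ 2 ≤ W ^ 2)
    (hk : k ^ 2 = c * (a - k)) :
    k * (W * U ^ 2 + W' * (2 * U * V)) ≤ W * (a * U ^ 2 + c * V ^ 2) := by
  have key : c * W * (W * (a * U ^ 2 + c * V ^ 2) - k * (W * U ^ 2 + W' * (2 * U * V)))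
      = (c * W * V - k * W' * U) ^ 2 + (k * U) ^ 2 * (W ^ 2 - W' ^ 2) := by
    linear_combination -(W * U) ^ 2 * hk
  have hW'W := sub_nonneg.mpr hW'
  have : 0 ≤ c * W * (W * (a * U ^ 2 + c * V ^ 2) - k * (W * U ^ 2 + W' * (2 * U * V))) := by
    rw [key]; positivity
  exact sub_nonneg.mp (nonneg_of_mul_nonneg_right this (mul_pos hc hW))

/-- For `u` C¹ on `[0,1]` with `u(0)=u(1)=1`, `-1 ≤ b < 3` and `0 ≤ β ≤ 1`,
`∫₀¹ (p + β p')((b/2)u² + ((3-b)/2)u'²) ≥ δ_b`. -/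
theorem stmt12 (u : ℝ → ℝ) (b β : ℝ)
    (hu : ContDiffOn ℝ 1 u (Set.Icc 0 1))
    (h0 : u 0 = 1) (h1 : u 1 = 1)
    (hb : -1 ≤ b) (hb3 : b < 3) (hβ0 : 0 ≤ β) (hβ1 : β ≤ 1) :
    (∫ x in (0:ℝ)..1,
        (p x + β * p' x) *
          (b/2 * u x^2 + (3 - b)/2 * (derivWithin u (Set.Icc 0 1) x)^2)) ≥
      delta b := by
  have hβ : |β| ≤ 1 := abs_le.mpr ⟨by linarith, hβ1⟩
  set v := derivWithin u (Icc 0 1)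
  have hucont : ContinuousOn u (Icc 0 1) := hu.continuousOn
  have hv : ContinuousOn v (Icc 0 1) :=
    hu.continuousOn_derivWithin (uniqueDiffOn_Icc zero_lt_one) le_rfl
  have hu' : ∀ x ∈ Ioo (0 : ℝ) 1, HasDerivAt u (v x) x := fun x hx =>
    (hu.differentiableOn one_ne_zero x (Ioo_subset_Icc_self hx)).hasDerivWithinAt.hasDerivAt
      (Icc_mem_nhds hx.1 hx.2)
  set G := fun y => delta b * ((p' y + β * p y) * u y ^ 2)
  have hG : G 1 - G 0 = delta b := by
    simp only [G, h0, h1]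
    linear_combination delta b * p'_one_sub_p'_zero + delta b * β * p_one_eq_p_zero
  rw [ge_iff_le, ← hG]
  refine sub_le_integral_of_hasDeriv_right_of_le zero_le_one (by fun_prop)
    (fun x hx => (((hu' x hx).p'_add_mul_p_mul_sq β).const_mul (delta b)).hasDerivWithinAt)
    (ContinuousOn.integrableOn_Icc (by fun_prop)) fun x _ => ?_
  exact quadratic_form_le (by linarith) (p_add_mul_p'_pos hβ x) (sq_p'_add_mul_p_le hβ x)
    (delta_sq hb hb3.le)
end

section
/- Blow-up ODE lemma: Let 0 < T* ≤ ∞ and let f, g ∈ C¹([0,T*), ℝ) be such that for some constant c > 0 and all t ∈ [0,T*): f'(t) ≥ c f(t) g(t) and g'(t) ≥ c f(t) g(t). If f(0) > 0 and g(0) > 0, then T* ≤ 1/(c √(f(0) g(0))). -/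
/-!
While `f` and `g` are positive both increase, so neither ever reaches `0`. Then `h = f g` satisfies
`h' = f' g + f g' ≥ c f g (f + g) ≥ 2 c h^{3/2}` by AM-GM. Hence `(h^{-1/2})' ≤ -c`, and since
`h^{-1/2} > 0` on the whole interval of existence, its length is less than `h(0)^{-1/2} / c`.
-/

open Real Set

theorem mul_sub_le_sub_of_hasDerivAt_ge {F F' : ℝ → ℝ} {a b C : ℝ}
    (hF : ∀ x ∈ Icc a b, HasDerivAt F (F' x) x) (hF' : ∀ x ∈ Ioo a b, C ≤ F' x) (hab : a ≤ b) :
    C * (b - a) ≤ F b - F a := by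
  refine (convex_Icc a b).mul_sub_le_image_sub_of_le_deriv
    (fun x hx ↦ (hF x hx).continuousAt.continuousWithinAt) ?_ ?_ a (left_mem_Icc.2 hab) b
    (right_mem_Icc.2 hab) hab
  · rw [interior_Icc]
    exact fun x hx ↦ (hF x (Ioo_subset_Icc_self hx)).differentiableAt.differentiableWithinAt
  · rw [interior_Icc]
    intro x hx
    rw [(hF x (Ioo_subset_Icc_self hx)).deriv]
    exact hF' x hx

theorem pos_on_Icc_of_pos_on_Ico {u : ℝ → ℝ} {a b : ℝ} (hu : ContinuousOn u (Icc a b))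
    (ha : 0 < u a) (hstep : ∀ s ∈ Ioc a b, (∀ r ∈ Ico a s, 0 < u r) → 0 < u s) :
    ∀ s ∈ Icc a b, 0 < u s := by
  by_contra! hneg
  set B := Icc a b ∩ u ⁻¹' Iic 0
  have hB : B.Nonempty := hneg
  have hBbdd : BddBelow B := ⟨a, fun s hs ↦ hs.1.1⟩
  have hfirst : sInf B ∈ B :=
    (hu.preimage_isClosed_of_isClosed isClosed_Icc isClosed_Iic).csInf_mem hB hBbdd
  have hne : sInf B ≠ a := fun h ↦ not_le.2 ha (h ▸ hfirst.2)
  refine not_lt.2 hfirst.2 (hstep _ ⟨lt_of_le_of_ne hfirst.1.1 (Ne.symm hne), hfirst.1.2⟩ ?_)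
  intro r hr
  by_contra! hur
  exact not_le.2 hr.2 (csInf_le hBbdd ⟨⟨hr.1, hr.2.le.trans hfirst.1.2⟩, hur⟩)

section BlowUp

variable {f g f' g' : ℝ → ℝ} {a b c : ℝ}

theorem le_of_pos_of_hasDerivAt_ge_mul_mul (hc : 0 ≤ c)
    (hf : ∀ s ∈ Icc a b, HasDerivAt f (f' s) s) (hfineq : ∀ s ∈ Icc a b, c * f s * g s ≤ f' s)
    (hpos : ∀ s ∈ Ico a b, 0 < f s ∧ 0 < g s) (hab : a ≤ b) : f a ≤ f b := by
  have := mul_sub_le_sub_of_hasDerivAt_ge hf (C := 0) (fun s hs ↦ by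
    obtain ⟨hfs, hgs⟩ := hpos s (Ioo_subset_Ico_self hs)
    exact (by positivity : 0 ≤ c * f s * g s).trans (hfineq s (Ioo_subset_Icc_self hs))) hab
  linarith

theorem pos_of_hasDerivAt_ge_mul_mul (hc : 0 ≤ c)
    (hf : ∀ s ∈ Icc a b, HasDerivAt f (f' s) s) (hg : ∀ s ∈ Icc a b, HasDerivAt g (g' s) s)
    (hfineq : ∀ s ∈ Icc a b, c * f s * g s ≤ f' s)
    (hgineq : ∀ s ∈ Icc a b, c * f s * g s ≤ g' s) (hf0 : 0 < f a) (hg0 : 0 < g a) :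
    ∀ s ∈ Icc a b, 0 < f s ∧ 0 < g s := by
  have hmin := pos_on_Icc_of_pos_on_Ico (u := fun s ↦ min (f s) (g s))
    (ContinuousOn.inf (fun s hs ↦ (hf s hs).continuousAt.continuousWithinAt)
      (fun s hs ↦ (hg s hs).continuousAt.continuousWithinAt)) (lt_min hf0 hg0) ?_
  · exact fun s hs ↦ lt_min_iff.1 (hmin s hs)
  intro s hs hpos
  have hsub : Icc a s ⊆ Icc a b := Icc_subset_Icc_right hs.2
  have hpos' : ∀ r ∈ Ico a s, 0 < f r ∧ 0 < g r := fun r hr ↦ lt_min_iff.1 (hpos r hr)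
  have hf_le := le_of_pos_of_hasDerivAt_ge_mul_mul hc (fun r hr ↦ hf r (hsub hr))
    (fun r hr ↦ hfineq r (hsub hr)) hpos' hs.1.le
  have hg_le := le_of_pos_of_hasDerivAt_ge_mul_mul (f := g) (g := f) hc
    (fun r hr ↦ hg r (hsub hr)) (fun r hr ↦ by rw [mul_right_comm]; exact hgineq r (hsub hr))
    (fun r hr ↦ (hpos' r hr).symm) hs.1.le
  exact lt_min (hf0.trans_le hf_le) (hg0.trans_le hg_le)

theorem HasDerivAt.neg_inv_sqrt {u : ℝ → ℝ} {u' x : ℝ} (hu : HasDerivAt u u' x) (hx : 0 < u x) :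
    HasDerivAt (fun s ↦ -(√(u s))⁻¹) (u' / (2 * u x * √(u x))) x := by
  refine ((hu.sqrt hx.ne').inv (sqrt_pos.2 hx).ne').neg.congr_deriv ?_
  rw [sq_sqrt hx.le]
  field_simp

theorem two_mul_mul_sqrt_le_of_ge_mul_mul {x y x' y' : ℝ} (hc : 0 ≤ c) (hx : 0 < x) (hy : 0 < y)
    (hx' : c * x * y ≤ x') (hy' : c * x * y ≤ y') :
    2 * c * (x * y) * √(x * y) ≤ x' * y + x * y' := by
  have hamgm : 2 * √(x * y) ≤ x + y := by
    rw [sqrt_mul hx.le]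
    nlinarith [sq_nonneg (√x - √y), sq_sqrt hx.le, sq_sqrt hy.le]
  have hcxy : 0 ≤ c * x * y := by positivity
  calc 2 * c * (x * y) * √(x * y) = c * x * y * (2 * √(x * y)) := by ring
    _ ≤ c * x * y * (x + y) := mul_le_mul_of_nonneg_left hamgm hcxy
    _ = c * x * y * y + x * (c * x * y) := by ring
    _ ≤ x' * y + x * y' := by gcongr

theorem mul_sub_lt_inv_sqrt_of_hasDerivAt_ge_mul_mul (hc : 0 ≤ c)
    (hf : ∀ s ∈ Icc a b, HasDerivAt f (f' s) s) (hg : ∀ s ∈ Icc a b, HasDerivAt g (g' s) s)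
    (hfineq : ∀ s ∈ Icc a b, c * f s * g s ≤ f' s)
    (hgineq : ∀ s ∈ Icc a b, c * f s * g s ≤ g' s) (hf0 : 0 < f a) (hg0 : 0 < g a)
    (hab : a ≤ b) :
    c * (b - a) < (√(f a * g a))⁻¹ := by
  have hpos := pos_of_hasDerivAt_ge_mul_mul hc hf hg hfineq hgineq hf0 hg0
  have hfg : ∀ s ∈ Icc a b, 0 < f s * g s := fun s hs ↦ mul_pos (hpos s hs).1 (hpos s hs).2
  have hdecay := mul_sub_le_sub_of_hasDerivAt_ge
    (fun s hs ↦ ((hf s hs).mul (hg s hs)).neg_inv_sqrt (hfg s hs)) (C := c) (fun s hs ↦ by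
      have hs' := Ioo_subset_Icc_self hs
      simp only [Pi.mul_apply]
      rw [le_div_iff₀ (by have := hfg s hs'; positivity)]
      linarith [two_mul_mul_sqrt_le_of_ge_mul_mul hc (hpos s hs').1 (hpos s hs').2
        (hfineq s hs') (hgineq s hs')]) hab
  have hb : 0 < (√(f b * g b))⁻¹ := by have := hfg b (right_mem_Icc.2 hab); positivity
  simp only [Pi.mul_apply] at hdecay
  linarith

end BlowUp

theorem stmt14_general (T : EReal) (c : ℝ) (hc : 0 < c)
    (f g f' g' : ℝ → ℝ)
    (hf : ∀ t : ℝ, 0 ≤ t → (t : EReal) < T → HasDerivAt f (f' t) t)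
    (hg : ∀ t : ℝ, 0 ≤ t → (t : EReal) < T → HasDerivAt g (g' t) t)
    (hfineq : ∀ t : ℝ, 0 ≤ t → (t : EReal) < T → f' t ≥ c * f t * g t)
    (hgineq : ∀ t : ℝ, 0 ≤ t → (t : EReal) < T → g' t ≥ c * f t * g t)
    (hf0 : 0 < f 0) (hg0 : 0 < g 0) :
    T ≤ ((1 / (c * Real.sqrt (f 0 * g 0)) : ℝ) : EReal) := by
  by_contra! hlt
  obtain ⟨t, hbt, htT⟩ := EReal.exists_between_coe_real hlt
  rw [EReal.coe_lt_coe_iff] at hbt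
  have ht : 0 ≤ t := le_trans (by positivity) hbt.le
  have hIcc : ∀ s ∈ Icc 0 t, 0 ≤ s ∧ (s : EReal) < T := fun s hs ↦
    ⟨hs.1, (EReal.coe_le_coe_iff.2 hs.2).trans_lt htT⟩
  have hbound := mul_sub_lt_inv_sqrt_of_hasDerivAt_ge_mul_mul hc.le
    (fun s hs ↦ hf s (hIcc s hs).1 (hIcc s hs).2) (fun s hs ↦ hg s (hIcc s hs).1 (hIcc s hs).2)
    (fun s hs ↦ hfineq s (hIcc s hs).1 (hIcc s hs).2)
    (fun s hs ↦ hgineq s (hIcc s hs).1 (hIcc s hs).2) hf0 hg0 ht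
  rw [sub_zero, ← one_div, ← lt_div_iff₀' hc, div_div] at hbound
  exact hbt.not_gt (by rwa [mul_comm c])

/-- Blow-up ODE lemma: if `f' ≥ c f g`, `g' ≥ c f g` on `[0,T*)` with `f(0), g(0) > 0`,
then `T* ≤ 1/(c √(f(0)g(0)))` (where `0 < T* ≤ ∞`). -/
theorem stmt14 (T : EReal) (hT : 0 < T) (c : ℝ) (hc : 0 < c)
    (f g f' g' : ℝ → ℝ)
    (hf : ∀ t : ℝ, 0 ≤ t → (t : EReal) < T → HasDerivAt f (f' t) t)
    (hg : ∀ t : ℝ, 0 ≤ t → (t : EReal) < T → HasDerivAt g (g' t) t)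
    (hf'c : ContinuousOn f' {t : ℝ | 0 ≤ t ∧ (t : EReal) < T})
    (hg'c : ContinuousOn g' {t : ℝ | 0 ≤ t ∧ (t : EReal) < T})
    (hfineq : ∀ t : ℝ, 0 ≤ t → (t : EReal) < T → f' t ≥ c * f t * g t)
    (hgineq : ∀ t : ℝ, 0 ≤ t → (t : EReal) < T → g' t ≥ c * f t * g t)
    (hf0 : 0 < f 0) (hg0 : 0 < g 0) :
    T ≤ ((1 / (c * Real.sqrt (f 0 * g 0)) : ℝ) : EReal) :=
  stmt14_general T c hc f g f' g' hf hg hfineq hgineq hf0 hg0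
end

section
/- For b ∈ (1,3], the only value of b for which there exists β ∈ [0,1] with β² + (2/(b-1))(δ_b - b/2) ≥ 0 is b = 2, in which case β = 1 works (since δ_2 = 1/2 gives 1 + (2/1)(1/2 - 1) = 0). Equivalently, for b ∈ (1,3] one has (2/(b-1))(b/2 - δ_b) ≤ 1 if and only if b = 2, where δ_b = (√(3-b)/4)(√(3(1+b)) - √(3-b)). -/
open Real

/-!
Writing `s = √(3(3 - b)(1 + b))`, one has `δ_b = (s - (3 - b))/4`, so for `b > 1` the inequality
says `δ_b ≥ 1/2`, i.e. `s ≥ 5 - b`. Since `(5 - b)² - 3(3 - b)(1 + b) = 4(b - 2)²`, this happens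
only for `b = 2`.
-/

lemma delta_eq {b : ℝ} (hb : b ≤ 3) :
    delta b = (√(3 * (3 - b) * (1 + b)) - (3 - b)) / 4 := by
  have h3b : 0 ≤ 3 - b := by linarith
  rw [delta, mul_sub, ← mul_div_right_comm, ← mul_div_right_comm, ← sqrt_mul h3b,
    mul_self_sqrt h3b]
  ring_nf

lemma half_le_delta_iff {b : ℝ} (hb : b ≤ 3) : 1 / 2 ≤ delta b ↔ b = 2 := by
  have key : (5 - b) ^ 2 - 3 * (3 - b) * (1 + b) = 4 * (b - 2) ^ 2 := by ring
  calc 1 / 2 ≤ delta b ↔ 5 - b ≤ √(3 * (3 - b) * (1 + b)) := by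
        rw [delta_eq hb]; constructor <;> intro h <;> linarith
    _ ↔ (5 - b) ^ 2 ≤ 3 * (3 - b) * (1 + b) := le_sqrt' (by linarith)
    _ ↔ (b - 2) ^ 2 ≤ 0 := by constructor <;> intro h <;> linarith
    _ ↔ b = 2 := by rw [sq_nonpos_iff, sub_eq_zero]

lemma scaled_gap_le_one_iff {b : ℝ} (hb : 1 < b) :
    (2 / (b - 1)) * (b / 2 - delta b) ≤ 1 ↔ 1 / 2 ≤ delta b := by
  rw [div_mul_eq_mul_div, div_le_one (by linarith)]
  constructor <;> intro h <;> linarith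

/-- For `b ∈ (1,3]`, `(2/(b-1))(b/2 - δ_b) ≤ 1` iff `b = 2`. -/
theorem stmt16 (b : ℝ) (hb : 1 < b) (hb3 : b ≤ 3) :
    (2 / (b - 1)) * (b / 2 - delta b) ≤ 1 ↔ b = 2 :=
  (scaled_gap_le_one_iff hb).trans (half_le_delta_iff hb3)
end
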